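/- Let G = (V,E) be a finite simple undirected graph with positive edge weights and unique shortest paths, let s, v, x, y be vertices with d_G(v,x) ≤ d_G(s,v), d_G(x,y) ≤ 2 · d_G(s,v), and d_G(y,s) ≤ 4 · d_G(s,v), and let f ∈ E be an edge such that s and v are connected in G − f, f lies on π(s,v), f lies on π(v,x), f lies on π(x,y), and f lies on π(y,s). Then d_{G−f}(v,x) + d_{G−f}(x,y) + d_{G−f}(y,s) ≤ 13 · d_{G−f}(s,v). (Case 8 in the proof of Lemma 4.1.) -/

import Mathlib

/-!
Let `f = s(a, b)` and write `d'` for the distance in `G - f`. Any walk through `f` can be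
rerouted around `f` at the cost of `d'(a, b)`, so each of the three distances `d'(v, x)`,
`d'(x, y)`, `d'(y, s)` is at most the corresponding distance in `G` plus `d'(a, b)`. The
shortest path `π(s, v)` splits at `f` into two `f`-free pieces of total weight at most
`d(s, v)`, and going around through `s` and `v` gives `d'(a, b) ≤ d(s, v) + d'(s, v)`.
Summing, the left side is at most `(1 + 2 + 4) d(s, v) + 3 (d(s, v) + d'(s, v)) ≤ 13 d'(s, v)`.
-/

open scoped ENNReal

variable {V : Type*}

/-- The total weight of a walk: the sum of the weights of its edges (in `ℝ≥0∞`). -/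
noncomputable def walkWeight {G : SimpleGraph V} (wt : Sym2 V → NNReal)
    {u v : V} (p : G.Walk u v) : ℝ≥0∞ :=
  (p.edges.map (fun e => (wt e : ℝ≥0∞))).sum

/-- The weighted shortest-path distance: the infimum over all walks from `u` to `v`
of their total weight (in `ℝ≥0∞`, so it is `∞` if `u` and `v` are not connected). -/
noncomputable def wdist (G : SimpleGraph V) (wt : Sym2 V → NNReal) (u v : V) : ℝ≥0∞ :=
  ⨅ p : G.Walk u v, walkWeight wt p

/-- `G` has unique shortest paths: for every pair of connected vertices there is exactly
one walk of minimum total weight. -/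
def HasUniqueShortestPaths (G : SimpleGraph V) (wt : Sym2 V → NNReal) : Prop :=
  ∀ u v : V, G.Reachable u v →
    ∃! p : G.Walk u v, walkWeight wt p = wdist G wt u v

open SimpleGraph

section WalkWeight

variable {G : SimpleGraph V} (wt : Sym2 V → NNReal)

@[simp]
lemma walkWeight_cons {u v w : V} (h : G.Adj u v) (p : G.Walk v w) :
    walkWeight wt (Walk.cons h p) = wt s(u, v) + walkWeight wt p := by
  simp [walkWeight]

lemma walkWeight_append {u v w : V} (p : G.Walk u v) (q : G.Walk v w) :
    walkWeight wt (p.append q) = walkWeight wt p + walkWeight wt q := by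
  simp [walkWeight, Walk.edges_append]

lemma walkWeight_reverse {u v : V} (p : G.Walk u v) :
    walkWeight wt p.reverse = walkWeight wt p := by
  simp [walkWeight, Walk.edges_reverse, List.sum_reverse]

lemma walkWeight_transfer {u v : V} (p : G.Walk u v) {H : SimpleGraph V}
    (hp : ∀ e ∈ p.edges, e ∈ H.edgeSet) :
    walkWeight wt (p.transfer H hp) = walkWeight wt p := by
  simp [walkWeight, Walk.edges_transfer]

lemma walkWeight_ne_top {u v : V} (p : G.Walk u v) : walkWeight wt p ≠ ⊤ := by
  induction p with
  | nil => simp [walkWeight]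
  | cons h p ih => simpa using ih

end WalkWeight

section WDist

variable {G : SimpleGraph V} (wt : Sym2 V → NNReal)

lemma wdist_le_walkWeight {u v : V} (p : G.Walk u v) : wdist G wt u v ≤ walkWeight wt p :=
  iInf_le _ p

@[simp]
lemma wdist_self (u : V) : wdist G wt u u = 0 :=
  nonpos_iff_eq_zero.mp (wdist_le_walkWeight wt Walk.nil)

lemma wdist_comm (u v : V) : wdist G wt u v = wdist G wt v u :=
  le_antisymm
    (le_iInf fun p => (wdist_le_walkWeight wt p.reverse).trans_eq (walkWeight_reverse wt p))
    (le_iInf fun p => (wdist_le_walkWeight wt p.reverse).trans_eq (walkWeight_reverse wt p))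

lemma wdist_eq_of_sym2_eq {a b c d : V} (h : s(a, b) = s(c, d)) :
    wdist G wt a b = wdist G wt c d := by
  rcases Sym2.eq_iff.mp h with ⟨rfl, rfl⟩ | ⟨rfl, rfl⟩
  · rfl
  · exact wdist_comm wt _ _

lemma wdist_triangle (u v w : V) : wdist G wt u w ≤ wdist G wt u v + wdist G wt v w := by
  simp only [wdist, ENNReal.iInf_add, ENNReal.add_iInf]
  exact le_iInf₂ fun q p => (wdist_le_walkWeight wt (p.append q)).trans_eq
    (walkWeight_append wt p q)

lemma wdist_le_add_of_adj {u u' : V} (h : G.Adj u u') (w : V) :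
    wdist G wt u w ≤ wt s(u, u') + wdist G wt u' w := by
  simp only [wdist, ENNReal.add_iInf]
  exact le_iInf fun p => (wdist_le_walkWeight wt (Walk.cons h p)).trans_eq
    (walkWeight_cons wt h p)

lemma wdist_le_wdist_of_le {H : SimpleGraph V} (hHG : H ≤ G) (u v : V) :
    wdist G wt u v ≤ wdist H wt u v :=
  le_iInf fun p => (wdist_le_walkWeight wt (p.mapLe hHG)).trans_eq
    (by simp [walkWeight])

end WDist

section DeleteEdge

variable {G : SimpleGraph V} (wt : Sym2 V → NNReal) (f : Sym2 V)

lemma wdist_deleteEdges_le_walkWeight {u w : V} (p : G.Walk u w) (hp : f ∉ p.edges) :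
    wdist (G.deleteEdges {f}) wt u w ≤ walkWeight wt p :=
  (wdist_le_walkWeight wt (p.toDeleteEdges {f} fun _ he hef => hp (hef ▸ he))).trans_eq
    (walkWeight_transfer wt p _)

/-- Cutting a walk at its first and last traversal of `f`: if the two traversals go in
opposite directions, the pieces before the first and after the last one already join up. -/
lemma exists_wdist_deleteEdges_add_le {u w : V} (p : G.Walk u w) (hp : f ∈ p.edges) :
    (∃ a b, f = s(a, b) ∧
      wdist (G.deleteEdges {f}) wt u a + wt f + wdist (G.deleteEdges {f}) wt b w ≤
        walkWeight wt p) ∨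
    wdist (G.deleteEdges {f}) wt u w + wt f ≤ walkWeight wt p := by
  set d := wdist (G.deleteEdges {f}) wt
  induction p with
  | nil => simp at hp
  | @cons u u' w h p ih =>
    rw [walkWeight_cons]
    by_cases hfe : s(u, u') = f
    · have hrest : d u' w ≤ walkWeight wt p ∨ d u w + wt f ≤ walkWeight wt p := by
        by_cases hp' : f ∈ p.edges
        · rcases ih hp' with ⟨a, b, hab, hle⟩ | hle
          · rcases Sym2.eq_iff.mp (hfe.trans hab) with ⟨rfl, rfl⟩ | ⟨rfl, rfl⟩
            · exact .inl (le_add_self.trans hle)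
            · exact .inr (by simpa [d, add_comm] using hle)
          · exact .inl (le_self_add.trans hle)
        · exact .inl (wdist_deleteEdges_le_walkWeight wt f p hp')
      rcases hrest with hle | hle
      · refine .inl ⟨u, u', hfe.symm, ?_⟩
        simpa [d, hfe] using hle
      · exact .inr (hle.trans le_add_self)
    · have hp' : f ∈ p.edges := by
        simpa [Ne.symm hfe] using hp
      have hadj : (G.deleteEdges {f}).Adj u u' := by
        simpa [deleteEdges_adj, h] using hfe
      rcases ih hp' with ⟨a, b, hab, hle⟩ | hle
      · refine .inl ⟨a, b, hab, ?_⟩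
        calc d u a + wt f + d b w ≤ wt s(u, u') + d u' a + wt f + d b w := by
              gcongr; exact wdist_le_add_of_adj wt hadj a
          _ = wt s(u, u') + (d u' a + wt f + d b w) := by ring
          _ ≤ _ := by gcongr
      · refine .inr ?_
        calc d u w + wt f ≤ wt s(u, u') + d u' w + wt f := by
              gcongr; exact wdist_le_add_of_adj wt hadj w
          _ = wt s(u, u') + (d u' w + wt f) := by ring
          _ ≤ _ := by gcongr

lemma wdist_deleteEdges_le_walkWeight_add {u w a b : V} (p : G.Walk u w) (hp : f ∈ p.edges)
    (hab : f = s(a, b)) :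
    wdist (G.deleteEdges {f}) wt u w ≤ walkWeight wt p + wdist (G.deleteEdges {f}) wt a b := by
  rcases exists_wdist_deleteEdges_add_le wt f p hp with ⟨a', b', hab', hle⟩ | hle
  · have hd := wdist_eq_of_sym2_eq (G := G.deleteEdges {f}) wt (hab'.symm.trans hab)
    set d := wdist (G.deleteEdges {f}) wt
    calc d u w ≤ d u a' + d a' b' + d b' w :=
          (wdist_triangle wt u b' w).trans (by gcongr; exact wdist_triangle wt u a' b')
      _ ≤ (d u a' + wt f + d b' w) + d a b := by
          rw [hd, add_right_comm _ (d a b)]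
          gcongr
          exact le_self_add
      _ ≤ walkWeight wt p + d a b := by gcongr
  · exact le_self_add.trans (le_add_right hle)

lemma wdist_deleteEdges_endpoints_le {u w a b : V} (p : G.Walk u w) (hp : f ∈ p.edges)
    (hf : 0 < wt f) (hpw : walkWeight wt p ≤ wdist (G.deleteEdges {f}) wt u w)
    (hab : f = s(a, b)) :
    wdist (G.deleteEdges {f}) wt a b ≤ walkWeight wt p + wdist (G.deleteEdges {f}) wt u w := by
  rcases exists_wdist_deleteEdges_add_le wt f p hp with ⟨a', b', hab', hle⟩ | hle
  · rw [wdist_eq_of_sym2_eq wt (hab.symm.trans hab')]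
    set d := wdist (G.deleteEdges {f}) wt
    calc d a' b' ≤ d a' u + d u w + d w b' :=
          (wdist_triangle wt a' w b').trans (by gcongr; exact wdist_triangle wt a' u w)
      _ = d u a' + d b' w + d u w := by
          rw [show d a' u = d u a' from wdist_comm wt a' u,
            show d w b' = d b' w from wdist_comm wt w b']
          ring
      _ ≤ (d u a' + wt f + d b' w) + d u w := by gcongr; exact le_self_add
      _ ≤ walkWeight wt p + d u w := by gcongr
  · exfalso
    have hfin : wdist (G.deleteEdges {f}) wt u w ≠ ⊤ :=
      ne_top_of_le_ne_top (walkWeight_ne_top wt p) (le_self_add.trans hle)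
    exact (ENNReal.lt_add_right hfin (by exact_mod_cast hf.ne')).not_ge (hle.trans hpw)

end DeleteEdge

theorem stmt18_general (G : SimpleGraph V) (wt : Sym2 V → NNReal)
    (hwt : ∀ e ∈ G.edgeSet, 0 < wt e)
    (s v x y : V)
    (hvx : wdist G wt v x ≤ wdist G wt s v)
    (hxy : wdist G wt x y ≤ 2 * wdist G wt s v)
    (hys : wdist G wt y s ≤ 4 * wdist G wt s v)
    (f : Sym2 V) (hf : f ∈ G.edgeSet)
    (qsv : G.Walk s v) (hqsv : walkWeight wt qsv = wdist G wt s v)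
    (qvx : G.Walk v x) (hqvx : walkWeight wt qvx = wdist G wt v x)
    (qxy : G.Walk x y) (hqxy : walkWeight wt qxy = wdist G wt x y)
    (qys : G.Walk y s) (hqys : walkWeight wt qys = wdist G wt y s)
    (hf1 : f ∈ qsv.edges) (hf2 : f ∈ qvx.edges)
    (hf3 : f ∈ qxy.edges) (hf4 : f ∈ qys.edges) :
    wdist (G.deleteEdges {f}) wt v x + wdist (G.deleteEdges {f}) wt x y +
        wdist (G.deleteEdges {f}) wt y s ≤
      13 * wdist (G.deleteEdges {f}) wt s v := by
  obtain ⟨⟨a, b⟩, hab⟩ := Sym2.mk_surjective f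
  set D := wdist G wt s v
  set d' := wdist (G.deleteEdges {f}) wt
  have hD : D ≤ d' s v := wdist_le_wdist_of_le wt (G.deleteEdges_le {f}) s v
  have hab' : d' a b ≤ D + d' s v :=
    hqsv ▸ wdist_deleteEdges_endpoints_le wt f qsv hf1 (hwt f hf) (hqsv ▸ hD) hab.symm
  have hvx' := hqvx ▸ wdist_deleteEdges_le_walkWeight_add wt f qvx hf2 hab.symm
  have hxy' := hqxy ▸ wdist_deleteEdges_le_walkWeight_add wt f qxy hf3 hab.symm
  have hys' := hqys ▸ wdist_deleteEdges_le_walkWeight_add wt f qys hf4 hab.symm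
  calc d' v x + d' x y + d' y s
      ≤ (wdist G wt v x + d' a b) + (wdist G wt x y + d' a b) + (wdist G wt y s + d' a b) := by
        gcongr
    _ ≤ (D + (D + d' s v)) + (2 * D + (D + d' s v)) + (4 * D + (D + d' s v)) := by gcongr
    _ = 10 * D + 3 * d' s v := by ring
    _ ≤ 10 * d' s v + 3 * d' s v := by gcongr
    _ = 13 * d' s v := by ring

theorem stmt18 [Fintype V] [DecidableEq V] (G : SimpleGraph V) (wt : Sym2 V → NNReal)
    (hwt : ∀ e ∈ G.edgeSet, 0 < wt e)
    (huniq : HasUniqueShortestPaths G wt)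
    (s v x y : V)
    (hvx : wdist G wt v x ≤ wdist G wt s v)
    (hxy : wdist G wt x y ≤ 2 * wdist G wt s v)
    (hys : wdist G wt y s ≤ 4 * wdist G wt s v)
    (f : Sym2 V) (hf : f ∈ G.edgeSet)
    (hconn : (G.deleteEdges {f}).Reachable s v)
    (qsv : G.Walk s v) (hqsv : walkWeight wt qsv = wdist G wt s v)
    (qvx : G.Walk v x) (hqvx : walkWeight wt qvx = wdist G wt v x)
    (qxy : G.Walk x y) (hqxy : walkWeight wt qxy = wdist G wt x y)
    (qys : G.Walk y s) (hqys : walkWeight wt qys = wdist G wt y s)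
    (hf1 : f ∈ qsv.edges) (hf2 : f ∈ qvx.edges)
    (hf3 : f ∈ qxy.edges) (hf4 : f ∈ qys.edges) :
    wdist (G.deleteEdges {f}) wt v x + wdist (G.deleteEdges {f}) wt x y +
        wdist (G.deleteEdges {f}) wt y s ≤
      13 * wdist (G.deleteEdges {f}) wt s v :=
  stmt18_general G wt hwt s v x y hvx hxy hys f hf qsv hqsv qvx hqvx qxy hqxy qys hqys hf1 hf2 hf3
    hf4
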